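/- arXiv:1511.05501 — 3 statements merged into one kernel-verified Lean document; each statement's English description precedes it below -/
import Mathlib

section
/- Let A be a finite abelian group, Â its character group over ℂ, H = A × Â, and α((σ,χ),(ρ,ψ)) = χ(ρ) the standard 2-cocycle. Then the twisted group algebra ℂ_α[H] is isomorphic to the matrix algebra M_{|A|}(ℂ); in particular it is a simple ℂ-algebra. -/
/-- The multiplication of the twisted group algebra `k_α[G]`. -/
noncomputable def twistedMul {G : Type*} [Group G] {k : Type*} [Field k]
    (α : G → G → kˣ) (f g : G →₀ k) : G →₀ k :=
  f.sum fun σ a => g.sum fun ρ b => Finsupp.single (σ * ρ) ((α σ ρ : k) * (a * b))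

/-- The standard 2-cocycle `α((σ,χ),(ρ,ψ)) = χ(ρ)` on `H = A × Â`. -/
def stdCocycle (A : Type*) [CommGroup A] :
    (A × (A →* ℂˣ)) → (A × (A →* ℂˣ)) → ℂˣ :=
  fun x y => x.2 y.1

/-! The basis element `e_(σ,χ)` acts on functions `A → k` by multiplication with `χ` followed by
translation by `σ`; this operator is `weylMatrix (σ, χ)`. Multiplication by `χ` and translation
by `ρ` commute up to the scalar `χ(ρ)`, so these matrices multiply according to the cocycle and
extending linearly gives an algebra map. On the positions `(σ b, b)` the entries of
`weylMatrix (σ, χ)` spell out the character `χ` and those of `weylMatrix (ρ, ψ)` vanish for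
`ρ ≠ σ`, so linear independence of characters makes the Weyl matrices linearly independent.
Since `|Â| = |A|` there are `|A|²` of them, so they form a basis of `M_{|A|}(k)`. -/

theorem linearCombination_twistedMul {G k R : Type*} [Group G] [Field k] [Semiring R]
    [Algebra k R] (α : G → G → kˣ) (m : G → R)
    (hm : ∀ x y, m x * m y = (α x y : k) • m (x * y)) (f g : G →₀ k) :
    Finsupp.linearCombination k m (twistedMul α f g) =
      Finsupp.linearCombination k m f * Finsupp.linearCombination k m g := by
  simp only [twistedMul, map_finsuppSum, Finsupp.linearCombination_single]
  rw [Finsupp.linearCombination_apply, Finsupp.linearCombination_apply, Finsupp.sum_mul]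
  simp only [Finsupp.mul_sum, smul_mul_smul_comm, hm, smul_smul, mul_comm]

theorem linearIndependent_units_monoidHom (G k : Type*) [Monoid G] [Field k] :
    LinearIndependent k fun χ : G →* kˣ ↦ fun a ↦ (χ a : k) :=
  (linearIndependent_monoidHom G k).comp (Units.coeHom k).comp fun _ _ h ↦
    MonoidHom.ext fun a ↦ Units.ext (DFunLike.congr_fun h a)

section Weyl

variable {k A : Type*} [Field k] [Group A] [DecidableEq A]

def weylMatrix (p : A × (A →* kˣ)) : Matrix A A k :=
  Matrix.of fun a b => if a = p.1 * b then (p.2 b : k) else 0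

theorem weylMatrix_one : weylMatrix (1 : A × (A →* kˣ)) = 1 := by
  ext a b
  simp [weylMatrix, Matrix.one_apply]

theorem weylMatrix_apply_mul_self (p : A × (A →* kˣ)) (σ b : A) :
    weylMatrix p (σ * b) b = if p.1 = σ then (p.2 b : k) else 0 := by
  simp [weylMatrix, eq_comm]

variable [Fintype A]

theorem weylMatrix_mul (p q : A × (A →* kˣ)) :
    weylMatrix p * weylMatrix q = (p.2 q.1 : k) • weylMatrix (p * q) := by
  ext a c
  simp [weylMatrix, Matrix.mul_apply, mul_assoc]

theorem linearIndependent_weylMatrix :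
    LinearIndependent k (weylMatrix : A × (A →* kˣ) → Matrix A A k) := by
  cases nonempty_fintype (A →* kˣ)
  rw [Fintype.linearIndependent_iff]
  rintro g hg ⟨σ, χ⟩
  have hchar : ∑ ψ : A →* kˣ, g (σ, ψ) • (fun b ↦ (ψ b : k)) = 0 := funext fun b ↦ by
    simpa [Matrix.sum_apply, Fintype.sum_prod_type, weylMatrix_apply_mul_self]
      using congr_fun (congr_fun hg (σ * b)) b
  exact Fintype.linearIndependent_iff.mp (linearIndependent_units_monoidHom A k) _ hchar χ

end Weyl

section Basis

variable {k A : Type*} [Field k] [CommGroup A] [Fintype A] [Fintype (A →* kˣ)]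
  [HasEnoughRootsOfUnity k (Monoid.exponent A)]

theorem card_prod_monoidHom_eq_finrank_matrix :
    Fintype.card (A × (A →* kˣ)) = Module.finrank k (Matrix A A k) := by
  rw [Fintype.card_prod, Module.finrank_matrix, Module.finrank_self, mul_one,
    Fintype.card_eq_nat_card (α := A →* kˣ), CommGroup.card_monoidHom_of_hasEnoughRootsOfUnity,
    Nat.card_eq_fintype_card]

variable [DecidableEq A]

variable (k A) in
noncomputable def weylBasis : Module.Basis (A × (A →* kˣ)) k (Matrix A A k) :=
  basisOfLinearIndependentOfCardEqFinrank linearIndependent_weylMatrix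
    card_prod_monoidHom_eq_finrank_matrix

theorem weylBasis_repr_symm_twistedMul (f g : (A × (A →* kˣ)) →₀ k) :
    (weylBasis k A).repr.symm (twistedMul (fun p q ↦ p.2 q.1) f g) =
      (weylBasis k A).repr.symm f * (weylBasis k A).repr.symm g := by
  simp only [Module.Basis.repr_symm_apply, weylBasis, coe_basisOfLinearIndependentOfCardEqFinrank]
  exact linearCombination_twistedMul _ _ weylMatrix_mul f g

theorem weylBasis_repr_symm_single_one :
    (weylBasis k A).repr.symm (Finsupp.single 1 1) = 1 := by
  simp [weylBasis, weylMatrix_one]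

end Basis

/-- for a finite abelian group `A`, `Â` its character group, `H = A × Â` and
`α` the standard 2-cocycle, the twisted group algebra `ℂ_α[H]` is isomorphic as a
`ℂ`-algebra to the matrix algebra `M_{|A|}(ℂ)` (matrices indexed by `A`); in particular
it is a simple `ℂ`-algebra. -/
theorem stmt7 {A : Type*} [CommGroup A] [Fintype A] [DecidableEq A] :
    (∃ e : ((A × (A →* ℂˣ)) →₀ ℂ) ≃ₗ[ℂ] Matrix A A ℂ,
      (∀ f g, e (twistedMul (stdCocycle A) f g) = e f * e g) ∧
      e (Finsupp.single 1 1) = 1) ∧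
    IsSimpleRing (Matrix A A ℂ) := by
  have : NeZero (Monoid.exponent A) := ⟨Monoid.exponent_ne_zero_of_finite⟩
  have := Fintype.ofFinite (A →* ℂˣ)
  exact ⟨⟨(weylBasis ℂ A).repr.symm, weylBasis_repr_symm_twistedMul,
    weylBasis_repr_symm_single_one⟩, inferInstance⟩
end

section
/- Let C be an additive symmetric monoidal category and O a ⊗-invertible object of C. Then the orbit category C/_{−⊗O}, with the same objects as C and Hom(a,b) := ⊕_{i ∈ ℤ} Hom_C(a, b ⊗ O^{⊗i}), with composition of f = {f_i} and g = {g_i} having i'-th component Σ_i (g_{i'−i} ⊗ O^{⊗i}) ∘ f_i, is a well-defined additive category (composition is associative and admits identities). -/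
open CategoryTheory MonoidalCategory
open scoped Classical

noncomputable section

variable {C : Type*} [Category C] [Preadditive C] [MonoidalCategory C]

/-- Hom groups of the orbit category `C/_{−⊗O}`:
`Hom(a,b) = ⊕_{i ∈ ℤ} Hom_C(a, b ⊗ O^{⊗i})`, where `pow i` denotes `O^{⊗i}`. -/
abbrev OrbitHom (pow : ℤ → C) (a b : C) :=
  Π₀ i : ℤ, (a ⟶ b ⊗ pow i)

/-- Composition in the orbit category: the `i'`-th component of `g ∘ f` is
`Σ_i (g_{i'−i} ⊗ O^{⊗i}) ∘ f_i` (here `μ i j : O^{⊗i} ⊗ O^{⊗j} ≅ O^{⊗(i+j)}`). -/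
def orbitComp (pow : ℤ → C) (μ : ∀ i j : ℤ, pow i ⊗ pow j ≅ pow (i + j))
    {a b c : C} (f : OrbitHom pow a b) (g : OrbitHom pow b c) : OrbitHom pow a c :=
  f.sum fun i fi => g.sum fun j gj =>
    DFinsupp.single (j + i)
      (fi ≫ (gj ▷ pow i) ≫ (α_ c (pow j) (pow i)).hom ≫ (c ◁ (μ j i).hom))

/-- The identity of the orbit category: the identity of `a` concentrated in degree `0`. -/
def orbitId (pow : ℤ → C) (pow0 : pow 0 ≅ 𝟙_ C) (a : C) : OrbitHom pow a a :=
  DFinsupp.single 0 ((ρ_ a).inv ≫ (a ◁ pow0.inv))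

/-!
Composition is biadditive, so by extensionality on `DFinsupp.single` associativity and the unit
laws need only be checked on morphisms concentrated in a single degree. There they reduce to the
coherence conditions on `μ` (associativity against the associator, unitality against `pow0`),
combined with naturality of the associator and the pentagon identity and the unitor coherences.
-/

section OrbitCategory

variable {pow : ℤ → C} {μ : ∀ i j : ℤ, pow i ⊗ pow j ≅ pow (i + j)} {pow0 : pow 0 ≅ 𝟙_ C}

lemma orbitHom_single_congr {a c : C} {i i' : ℤ} (h : i = i') (x : a ⟶ c ⊗ pow i) :
    (DFinsupp.single i x : OrbitHom pow a c) =
      DFinsupp.single (β := fun i => a ⟶ c ⊗ pow i) i' (x ≫ c ◁ eqToHom (congrArg pow h)) := by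
  subst h
  simp

lemma orbitComp_add_left {a b c : C} (f f' : OrbitHom pow a b) (g : OrbitHom pow b c) :
    orbitComp pow μ (f + f') g = orbitComp pow μ f g + orbitComp pow μ f' g := by
  unfold orbitComp
  refine DFinsupp.sum_add_index (fun _ => by simp) fun i x x' => ?_
  rw [← DFinsupp.sum_add]
  simp only [Preadditive.add_comp, DFinsupp.single_add]

variable [MonoidalPreadditive C]

lemma orbitComp_single_single {a b c : C} {i j : ℤ} (x : a ⟶ b ⊗ pow i) (y : b ⟶ c ⊗ pow j) :
    orbitComp pow μ (DFinsupp.single i x) (DFinsupp.single j y) =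
      DFinsupp.single (β := fun i => a ⟶ c ⊗ pow i) (j + i)
        (x ≫ y ▷ pow i ≫ (α_ c (pow j) (pow i)).hom ≫ c ◁ (μ j i).hom) := by
  unfold orbitComp
  rw [DFinsupp.sum_single_index, DFinsupp.sum_single_index] <;> simp

lemma orbitComp_add_right {a b c : C} (f : OrbitHom pow a b) (g g' : OrbitHom pow b c) :
    orbitComp pow μ f (g + g') = orbitComp pow μ f g + orbitComp pow μ f g' := by
  unfold orbitComp
  rw [← DFinsupp.sum_add]
  refine Finset.sum_congr rfl fun i _ =>
    DFinsupp.sum_add_index (fun _ => by simp) fun j y y' => ?_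
  simp only [MonoidalPreadditive.add_whiskerRight, Preadditive.add_comp, Preadditive.comp_add,
    DFinsupp.single_add]

lemma orbitId_comp_single
    (hur : ∀ i : ℤ, (μ i 0).hom =
      (pow i ◁ pow0.hom) ≫ (ρ_ (pow i)).hom ≫ eqToHom (by rw [add_zero]))
    {a b : C} {j : ℤ} (y : a ⟶ b ⊗ pow j) :
    orbitComp pow μ (orbitId pow pow0 a) (DFinsupp.single j y) = DFinsupp.single j y := by
  rw [orbitId, orbitComp_single_single, orbitHom_single_congr (add_zero j)]
  congr 1
  rw [hur j]
  simp only [Category.assoc, MonoidalCategory.whiskerLeft_comp,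
    MonoidalCategory.whiskerLeft_eqToHom, eqToHom_trans, eqToHom_refl, Category.comp_id]
  rw [whisker_exchange_assoc]
  simp

lemma single_comp_orbitId
    (hul : ∀ i : ℤ, (μ 0 i).hom =
      (pow0.hom ▷ pow i) ≫ (λ_ (pow i)).hom ≫ eqToHom (by rw [zero_add]))
    {a b : C} {i : ℤ} (x : a ⟶ b ⊗ pow i) :
    orbitComp pow μ (DFinsupp.single i x) (orbitId pow pow0 b) = DFinsupp.single i x := by
  rw [orbitId, orbitComp_single_single, orbitHom_single_congr (zero_add i)]
  congr 1
  rw [hul i]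
  simp only [MonoidalCategory.comp_whiskerRight, Category.assoc,
    MonoidalCategory.whiskerLeft_comp, MonoidalCategory.whiskerLeft_eqToHom,
    eqToHom_trans, eqToHom_refl, Category.comp_id]
  rw [associator_naturality_middle_assoc]
  simp [← MonoidalCategory.whiskerLeft_comp]

lemma orbitComp_assoc_single
    (hassoc : ∀ i j l : ℤ,
      ((μ i j).hom ▷ pow l) ≫ (μ (i + j) l).hom =
        (α_ (pow i) (pow j) (pow l)).hom ≫ (pow i ◁ (μ j l).hom) ≫ (μ i (j + l)).hom ≫
          eqToHom (by rw [add_assoc]))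
    {a b c d : C} {i j k : ℤ} (x : a ⟶ b ⊗ pow i) (y : b ⟶ c ⊗ pow j) (z : c ⟶ d ⊗ pow k) :
    orbitComp pow μ (orbitComp pow μ (DFinsupp.single i x) (DFinsupp.single j y))
        (DFinsupp.single k z) =
      orbitComp pow μ (DFinsupp.single i x)
        (orbitComp pow μ (DFinsupp.single j y) (DFinsupp.single k z)) := by
  simp only [orbitComp_single_single]
  rw [orbitHom_single_congr (add_assoc k j i).symm]
  congr 1
  simp only [MonoidalCategory.comp_whiskerRight, Category.assoc, whisker_exchange_assoc]
  rw [associator_naturality_middle_assoc, ← MonoidalCategory.whiskerLeft_comp,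
    ← MonoidalCategory.whiskerLeft_comp, hassoc k j i, ← associator_naturality_left_assoc,
    associator_naturality_right_assoc]
  simp [pentagon_assoc]

variable (μ) in
def orbitCompLeft {a b c : C} (g : OrbitHom pow b c) : OrbitHom pow a b →+ OrbitHom pow a c :=
  AddMonoidHom.mk' (fun f => orbitComp pow μ f g) fun f f' => orbitComp_add_left f f' g

variable (μ) in
def orbitCompRight {a b c : C} (f : OrbitHom pow a b) : OrbitHom pow b c →+ OrbitHom pow a c :=
  AddMonoidHom.mk' (orbitComp pow μ f) (orbitComp_add_right f)

lemma orbitComp_assoc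
    (hassoc : ∀ i j l : ℤ,
      ((μ i j).hom ▷ pow l) ≫ (μ (i + j) l).hom =
        (α_ (pow i) (pow j) (pow l)).hom ≫ (pow i ◁ (μ j l).hom) ≫ (μ i (j + l)).hom ≫
          eqToHom (by rw [add_assoc]))
    {a b c d : C} (f : OrbitHom pow a b) (g : OrbitHom pow b c) (h : OrbitHom pow c d) :
    orbitComp pow μ (orbitComp pow μ f g) h = orbitComp pow μ f (orbitComp pow μ g h) := by
  suffices hf : (orbitCompLeft μ h).comp (orbitCompLeft μ g) =
      orbitCompLeft μ (orbitComp pow μ g h) from DFunLike.congr_fun hf f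
  refine DFinsupp.addHom_ext fun i x => ?_
  suffices hg : (orbitCompLeft μ h).comp (orbitCompRight μ (DFinsupp.single i x)) =
      (orbitCompRight μ (DFinsupp.single i x)).comp (orbitCompLeft μ h) from
    DFunLike.congr_fun hg g
  refine DFinsupp.addHom_ext fun j y => ?_
  suffices hh : orbitCompRight μ (orbitComp pow μ (DFinsupp.single i x) (DFinsupp.single j y)) =
      (orbitCompRight μ (DFinsupp.single i x)).comp (orbitCompRight μ (DFinsupp.single j y)) from
    DFunLike.congr_fun hh h
  exact DFinsupp.addHom_ext fun k z => orbitComp_assoc_single hassoc x y z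

lemma orbitId_comp
    (hur : ∀ i : ℤ, (μ i 0).hom =
      (pow i ◁ pow0.hom) ≫ (ρ_ (pow i)).hom ≫ eqToHom (by rw [add_zero]))
    {a b : C} (f : OrbitHom pow a b) :
    orbitComp pow μ (orbitId pow pow0 a) f = f := by
  suffices hf : orbitCompRight μ (orbitId pow pow0 a) = AddMonoidHom.id (OrbitHom pow a b) from
    DFunLike.congr_fun hf f
  exact DFinsupp.addHom_ext fun j y => orbitId_comp_single hur y

lemma orbitComp_id
    (hul : ∀ i : ℤ, (μ 0 i).hom =
      (pow0.hom ▷ pow i) ≫ (λ_ (pow i)).hom ≫ eqToHom (by rw [zero_add]))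
    {a b : C} (f : OrbitHom pow a b) :
    orbitComp pow μ f (orbitId pow pow0 b) = f := by
  suffices hf : orbitCompLeft μ (orbitId pow pow0 b) = AddMonoidHom.id (OrbitHom pow a b) from
    DFunLike.congr_fun hf f
  exact DFinsupp.addHom_ext fun i x => single_comp_orbitId hul x

end OrbitCategory

theorem stmt10 [MonoidalPreadditive C]
    (pow : ℤ → C) (pow0 : pow 0 ≅ 𝟙_ C)
    (μ : ∀ i j : ℤ, pow i ⊗ pow j ≅ pow (i + j))
    (hassoc : ∀ i j l : ℤ,
      ((μ i j).hom ▷ pow l) ≫ (μ (i + j) l).hom =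
        (α_ (pow i) (pow j) (pow l)).hom ≫ (pow i ◁ (μ j l).hom) ≫ (μ i (j + l)).hom ≫
          eqToHom (by rw [add_assoc]))
    (hul : ∀ i : ℤ, (μ 0 i).hom =
      (pow0.hom ▷ pow i) ≫ (λ_ (pow i)).hom ≫ eqToHom (by rw [zero_add]))
    (hur : ∀ i : ℤ, (μ i 0).hom =
      (pow i ◁ pow0.hom) ≫ (ρ_ (pow i)).hom ≫ eqToHom (by rw [add_zero])) :
    (∀ (a b c d : C) (f : OrbitHom pow a b) (g : OrbitHom pow b c) (h : OrbitHom pow c d),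
      orbitComp pow μ (orbitComp pow μ f g) h = orbitComp pow μ f (orbitComp pow μ g h)) ∧
    (∀ (a b : C) (f : OrbitHom pow a b), orbitComp pow μ (orbitId pow pow0 a) f = f) ∧
    (∀ (a b : C) (f : OrbitHom pow a b), orbitComp pow μ f (orbitId pow pow0 b) = f) ∧
    (∀ (a b c : C) (f f' : OrbitHom pow a b) (g : OrbitHom pow b c),
      orbitComp pow μ (f + f') g = orbitComp pow μ f g + orbitComp pow μ f' g) ∧
    (∀ (a b c : C) (f : OrbitHom pow a b) (g g' : OrbitHom pow b c),
      orbitComp pow μ f (g + g') = orbitComp pow μ f g + orbitComp pow μ f g') :=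
  ⟨fun _ _ _ _ => orbitComp_assoc hassoc, fun _ _ => orbitId_comp hur, fun _ _ => orbitComp_id hul,
    fun _ _ _ => orbitComp_add_left, fun _ _ _ => orbitComp_add_right⟩

end
end

section
/- Let C be an additive symmetric monoidal category in which Hom(L^{⊗p}, L^{⊗q}) ≅ δ_{pq}·ℚ for a fixed object L (Kronecker orthogonality), and suppose M is a direct summand of ⊕_{r=0}^{d} ⊕_{j=1}^{n} L^{⊗r}. Then M is isomorphic to a direct sum of objects of the form L^{⊗r} with multiplicities: M ≅ ⊕_{r=0}^{d} (L^{⊗r})^{⊕ m_r} for some natural numbers m_r. -/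
/-!
Write `M` as a retract `i : M ⟶ ⨁ X`, `r : ⨁ X ⟶ M` of a finite biproduct of objects between
which every nonzero morphism is an isomorphism (for the powers of `L` this is Kronecker
orthogonality together with `End(L^{⊗p}) ≅ ℚ` being a field). If the idempotent `r ≫ i` vanishes,
`M` is zero. Otherwise some entry `g : X j ⟶ X k` of it is nonzero, hence invertible, and
`(g⁻¹ ≫ ι_j ≫ r, i ≫ π_k)` splits `X k` off `M`. Its complement, cut out by an idempotent, is a
retract of the biproduct with the `k`-th summand removed, and we conclude by induction on the
number of summands. Grouping the summands `L^{⊗r}` by `r` gives the multiplicities `m_r`.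
-/

open CategoryTheory CategoryTheory.Limits

universe v u w

attribute [local instance] hasBinaryBiproducts_of_finite_biproducts

section

variable {C : Type u} [Category.{v} C] [Preadditive C]

lemma isIso_of_ne_zero_of_orthogonal {β K : Type*} [DivisionRing K] {L : β → C}
    (horth : ∀ p q : β, p ≠ q → ∀ f : L p ⟶ L q, f = 0)
    (hend : ∀ p : β, Nonempty (End (L p) ≃+* K)) {p q : β} (f : L p ⟶ L q) (hf : f ≠ 0) :
    IsIso f := by
  obtain rfl : p = q := by
    by_contra hpq
    exact hf (horth p q hpq f)
  obtain ⟨φ⟩ := hend p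
  have hφf : φ f ≠ 0 := (map_ne_zero_iff φ φ.injective).mpr hf
  exact (isUnit_iff_isIso (X := L p) f).mp ((MulEquiv.isUnit_map φ.toMulEquiv).mp hφf.isUnit)

lemma exists_iso_biprod_of_comp_eq_id [IsIdempotentComplete C] [HasBinaryBiproducts C]
    {X M : C} (α : X ⟶ M) (β : M ⟶ X) (hαβ : α ≫ β = 𝟙 X) :
    ∃ (M' : C) (e : M ≅ X ⊞ M'), e.hom ≫ biprod.fst = β := by
  set q : M ⟶ M := 𝟙 M - β ≫ α
  have hq : q ≫ q = q := by
    simp only [q, Preadditive.sub_comp, Preadditive.comp_sub, Category.id_comp,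
      Category.comp_id, Category.assoc, reassoc_of% hαβ]
    abel
  obtain ⟨M', s, t, hst, hts⟩ := IsIdempotentComplete.idempotents_split M q hq
  have hαt : α ≫ t = 0 := calc
    α ≫ t = α ≫ (t ≫ s) ≫ t := by rw [Category.assoc, hst, Category.comp_id]
    _ = 0 := by simp [hts, q, Preadditive.sub_comp, Preadditive.comp_sub, reassoc_of% hαβ]
  have hsβ : s ≫ β = 0 := calc
    s ≫ β = s ≫ (t ≫ s) ≫ β := by rw [← Category.assoc, ← Category.assoc, hst, Category.id_comp]
    _ = 0 := by simp [hts, q, Preadditive.sub_comp, hαβ]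
  refine ⟨M', ⟨biprod.lift β t, biprod.desc α s, ?_, ?_⟩, biprod.lift_fst _ _⟩
  · rw [biprod.lift_desc, hts, add_sub_cancel]
  · ext <;> simp [hαβ, hαt, hsβ, hst]

variable [HasFiniteBiproducts C]

lemma biproduct.exists_ι_comp_π_ne_zero {ι κ : Type w} [Finite ι] [Finite κ] {f : ι → C}
    {g : κ → C} {φ : ⨁ f ⟶ ⨁ g} (hφ : φ ≠ 0) :
    ∃ j k, biproduct.ι f j ≫ φ ≫ biproduct.π g k ≠ 0 := by
  by_contra! h
  exact hφ (biproduct.hom_ext' _ _ fun j => biproduct.hom_ext _ _ fun k => by simpa using h j k)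

lemma biproduct.comp_toSubtype_fromSubtype_of_π_eq_zero {ι : Type w} [Finite ι] {M : C}
    (f : ι → C) (P : ι → Prop) (g : M ⟶ ⨁ f) (hg : ∀ k, ¬ P k → g ≫ biproduct.π f k = 0) :
    g ≫ biproduct.toSubtype f P ≫ biproduct.fromSubtype f P = g := by
  classical
  ext k
  by_cases hk : P k <;> simp [hk, hg]

noncomputable def CategoryTheory.Retract.biproductSubtype {ι : Type w} [Finite ι] {M : C}
    {f : ι → C} (h : Retract M (⨁ f)) (P : ι → Prop)
    (hP : ∀ k, ¬ P k → h.i ≫ biproduct.π f k = 0) :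
    Retract M (⨁ Subtype.restrict P f) where
  i := h.i ≫ biproduct.toSubtype f P
  r := biproduct.fromSubtype f P ≫ h.r
  retract := by
    rw [Category.assoc,
      reassoc_of% biproduct.comp_toSubtype_fromSubtype_of_π_eq_zero f P h.i hP, h.retract]

noncomputable def biproductFinSuccIso {n : ℕ} (f : Fin (n + 1) → C) :
    ⨁ f ≅ f 0 ⊞ ⨁ fun t : Fin n => f t.succ where
  hom := biprod.lift (biproduct.π f 0) (biproduct.lift fun t => biproduct.π f t.succ)
  inv := biprod.desc (biproduct.ι f 0) (biproduct.desc fun t => biproduct.ι f t.succ)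
  hom_inv_id := by
    rw [biprod.lift_desc, biproduct.lift_desc, ← biproduct.total, Fin.sum_univ_succ]
  inv_hom_id := by
    ext <;> simp [biproduct.ι_π, Fin.succ_ne_zero, (Fin.succ_ne_zero _).symm]

noncomputable def biproductSigmaFiberIso {κ α : Type w} [Finite κ] [Finite α] (c : κ → α)
    (Y : α → C) :
    (⨁ fun t => Y (c t)) ≅ ⨁ fun x : Σ a, Fin (Nat.card {t // c t = a}) => Y x.1 :=
  biproduct.whiskerEquiv ((Equiv.sigmaFiberEquiv c).symm.trans
    (Equiv.sigmaCongrRight fun a => Finite.equivFin {t // c t = a})) fun t => Iso.refl (Y (c t))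

theorem exists_iso_biproduct_of_retract [IsIdempotentComplete C] {ι : Type w} [Finite ι]
    (X : ι → C) (hX : ∀ j k (f : X j ⟶ X k), f ≠ 0 → IsIso f) {M : C} (h : Retract M (⨁ X)) :
    ∃ (n : ℕ) (b : Fin n → ι), Nonempty (M ≅ ⨁ fun t => X (b t)) := by
  induction hN : Nat.card ι using Nat.strong_induction_on generalizing ι M with
  | _ N ih =>
  by_cases hzero : h.r ≫ h.i = 0
  · have hM : IsZero M := (IsZero.iff_id_eq_zero M).mpr <| calc
      𝟙 M = h.i ≫ (h.r ≫ h.i) ≫ h.r := by simp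
      _ = 0 := by simp [hzero]
    have hempty : IsZero (⨁ fun t : Fin 0 => X t.elim0) :=
      (IsZero.iff_id_eq_zero _).mpr (biproduct.hom_ext' _ _ finZeroElim)
    exact ⟨0, Fin.elim0, ⟨hM.iso hempty⟩⟩
  obtain ⟨j, k, hjk⟩ := biproduct.exists_ι_comp_π_ne_zero hzero
  have := hX j k _ hjk
  obtain ⟨M', e, he⟩ := exists_iso_biprod_of_comp_eq_id
    (inv (biproduct.ι X j ≫ (h.r ≫ h.i) ≫ biproduct.π X k) ≫ biproduct.ι X j ≫ h.r)
    (h.i ≫ biproduct.π X k) (by simp)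
  let h' : Retract M' (⨁ Subtype.restrict (· ≠ k) X) :=
    (Retract.mk (biprod.inr ≫ e.inv) (e.hom ≫ biprod.snd) (by simp) |>.trans h).biproductSubtype
      (· ≠ k) (by simp [← he])
  obtain ⟨n, b, ⟨ψ⟩⟩ := ih _ (hN ▸ Finite.card_subtype_lt (not_not.mpr rfl))
    (Subtype.restrict _ X) (fun j k => hX j.1 k.1) h' rfl
  let b' : Fin (n + 1) → ι := Fin.cons k fun t => b t
  exact ⟨n + 1, b', ⟨e ≪≫ biprod.mapIso (Iso.refl _) ψ ≪≫
    (biproductFinSuccIso fun t => X (b' t)).symm⟩⟩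

end

theorem stmt18_general {C : Type*} [Category C] [Preadditive C]
    [HasFiniteBiproducts C] [IsIdempotentComplete C]
    (Lpow : ℕ → C)
    (horth : ∀ p q : ℕ, p ≠ q → ∀ f : Lpow p ⟶ Lpow q, f = 0)
    (hend : ∀ p : ℕ, Nonempty (End (Lpow p) ≃+* ℚ))
    (d n : ℕ) (M : C)
    (i : M ⟶ ⨁ fun x : Fin (d + 1) × Fin n => Lpow (x.1 : ℕ))
    (p : (⨁ fun x : Fin (d + 1) × Fin n => Lpow (x.1 : ℕ)) ⟶ M)
    (hip : i ≫ p = 𝟙 M) :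
    ∃ m : Fin (d + 1) → ℕ,
      Nonempty (M ≅ ⨁ fun x : Σ r : Fin (d + 1), Fin (m r) => Lpow (x.1 : ℕ)) := by
  obtain ⟨κ, b, ⟨ψ⟩⟩ := exists_iso_biproduct_of_retract
    (fun x : Fin (d + 1) × Fin n => Lpow x.1)
    (fun _ _ => isIso_of_ne_zero_of_orthogonal horth hend) ⟨i, p, hip⟩
  exact ⟨_, ⟨ψ ≪≫ biproductSigmaFiberIso (fun t => (b t).1) fun r => Lpow r⟩⟩

/-- let `C` be a `ℚ`-linear additive idempotent-complete category and
`L^{⊗r} = Lpow r` objects satisfying Kronecker orthogonality: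
`Hom(L^{⊗p}, L^{⊗q}) = 0` for `p ≠ q` and `End(L^{⊗p}) ≅ ℚ`.  If `M` is a direct summand
of `⊕_{r=0}^{d} ⊕_{j=1}^{n} L^{⊗r}`, then `M ≅ ⊕_{r=0}^{d} (L^{⊗r})^{⊕ m_r}` for some
natural numbers `m_r`. -/
theorem stmt18 {C : Type*} [Category C] [Preadditive C] [Linear ℚ C]
    [HasFiniteBiproducts C] [IsIdempotentComplete C]
    (Lpow : ℕ → C)
    (horth : ∀ p q : ℕ, p ≠ q → ∀ f : Lpow p ⟶ Lpow q, f = 0)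
    (hend : ∀ p : ℕ, Nonempty (End (Lpow p) ≃+* ℚ))
    (d n : ℕ) (M : C)
    (i : M ⟶ ⨁ fun x : Fin (d + 1) × Fin n => Lpow (x.1 : ℕ))
    (p : (⨁ fun x : Fin (d + 1) × Fin n => Lpow (x.1 : ℕ)) ⟶ M)
    (hip : i ≫ p = 𝟙 M) :
    ∃ m : Fin (d + 1) → ℕ,
      Nonempty (M ≅ ⨁ fun x : Σ r : Fin (d + 1), Fin (m r) => Lpow (x.1 : ℕ)) :=
  stmt18_general Lpow horth hend d n M i p hip
end
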